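/- Let M(θ) = (DK(θ) | V(θ)) where K : 𝕋ⁿ → T*𝕋ⁿ parametrizes a KAM torus with Φ¹(K(θ)) = K(θ+ω), and suppose the linearization satisfies DΦ¹(K(θ)) M(θ) = M(θ+ω) · [[Id, S(θ)],[0, e^{-λ} Id]] (upper triangular block form) with λ > 0 and S continuous on 𝕋ⁿ. Then the cohomological equation B(θ) - e^{-λ} B(θ+ω) = -S(θ) has a unique continuous solution B : 𝕋ⁿ → ℝ^{n×n}, given by B(θ) = -∑_{k≥0} e^{-λk} S(θ + kω), and with E^s spanned by DK(θ)B(θ) + V(θ) one gets the invariant splitting DΦ¹ · (E^c | E^s) with diagonal block matrix diag(Id, e^{-λ}Id). -/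

import Mathlib

open MeasureTheory Set Filter Topology

noncomputable section

abbrev V (n : ℕ) := EuclideanSpace ℝ (Fin n)

def intVec {n : ℕ} (m : Fin n → ℤ) : V n := WithLp.toLp 2 (fun i => (m i : ℝ))

/-
Since `|e^{-λ}| < 1`, the operator `B ↦ e^{-λ} B(· + ω)` is a contraction on bounded functions,
so there are no small divisors: `Id - e^{-λ} B(· + ω)` is inverted by its Neumann series, which
is the discounted Birkhoff sum `∑ₖ e^{-λk} S(θ + kω)`, a uniformly convergent series of continuous
periodic functions. Any other bounded solution differs from it by a bounded solution of
`D = e^{-λ} D(· + ω)`, and iterating gives `‖D‖ ≤ e^{-λk} sup ‖D‖ → 0`. Continuous periodic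
functions are bounded, and the invariance of the stable bundle is then linear algebra with the
block upper-triangular form.
-/

section DiscountedBirkhoffSum

variable {X 𝕜 E : Type*} [NormedField 𝕜] [NormedAddCommGroup E] [NormedSpace 𝕜 E]

def discountedBirkhoffSum (T : X → X) (r : 𝕜) (S : X → E) (x : X) : E :=
  ∑' k : ℕ, r ^ k • S (T^[k] x)

lemma norm_pow_smul_le {r : 𝕜} {v : E} {C : ℝ} (hv : ‖v‖ ≤ C) (k : ℕ) :
    ‖r ^ k • v‖ ≤ ‖r‖ ^ k * C := by
  rw [norm_smul, norm_pow]
  exact mul_le_mul_of_nonneg_left hv (by positivity)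

lemma summable_geometric_mul_const {r : 𝕜} (hr : ‖r‖ < 1) (C : ℝ) :
    Summable fun k : ℕ => ‖r‖ ^ k * C :=
  (summable_geometric_of_lt_one (norm_nonneg r) hr).mul_right C

variable {T : X → X} {r : 𝕜} {S : X → E} {C : ℝ}

lemma discountedBirkhoffSum_apply_eq_of_commute {τ : X → X} (hτ : Function.Commute T τ)
    (hS : ∀ x, S (τ x) = S x) (x : X) :
    discountedBirkhoffSum T r S (τ x) = discountedBirkhoffSum T r S x := by
  simp only [discountedBirkhoffSum, (hτ.iterate_left _).eq, hS]

lemma eq_zero_of_eq_smul_comp {D : X → E} (hr : ‖r‖ < 1) (hD : ∀ x, ‖D x‖ ≤ C)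
    (h : ∀ x, D x = r • D (T x)) : D = 0 := by
  have hbound : ∀ (k : ℕ) x, ‖D x‖ ≤ ‖r‖ ^ k * C := by
    intro k
    induction k with
    | zero => simpa using hD
    | succ k ih =>
      intro x
      calc ‖D x‖ = ‖r‖ * ‖D (T x)‖ := by rw [h x, norm_smul]
        _ ≤ ‖r‖ * (‖r‖ ^ k * C) := mul_le_mul_of_nonneg_left (ih _) (norm_nonneg r)
        _ = ‖r‖ ^ (k + 1) * C := by ring
  have hlim : Tendsto (fun k : ℕ => ‖r‖ ^ k * C) atTop (𝓝 0) := by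
    simpa using (tendsto_pow_atTop_nhds_zero_of_lt_one (norm_nonneg r) hr).mul_const C
  funext x
  exact norm_le_zero_iff.mp (ge_of_tendsto' hlim fun k => hbound k x)

lemma norm_discountedBirkhoffSum_le (hr : ‖r‖ < 1) (hS : ∀ x, ‖S x‖ ≤ C) (x : X) :
    ‖discountedBirkhoffSum T r S x‖ ≤ (1 - ‖r‖)⁻¹ * C :=
  tsum_of_norm_bounded ((hasSum_geometric_of_lt_one (norm_nonneg r) hr).mul_right C)
    fun k => norm_pow_smul_le (hS _) k

variable [CompleteSpace E]

lemma summable_discountedBirkhoffSum (hr : ‖r‖ < 1) (hS : ∀ x, ‖S x‖ ≤ C) (x : X) :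
    Summable fun k : ℕ => r ^ k • S (T^[k] x) :=
  (summable_geometric_mul_const hr C).of_norm_bounded fun k => norm_pow_smul_le (hS _) k

lemma discountedBirkhoffSum_eq_add_smul (hr : ‖r‖ < 1) (hS : ∀ x, ‖S x‖ ≤ C) (x : X) :
    discountedBirkhoffSum T r S x = S x + r • discountedBirkhoffSum T r S (T x) := by
  have hshift : ∀ k : ℕ, r ^ (k + 1) • S (T^[k + 1] x) = r • (r ^ k • S (T^[k] (T x))) :=
    fun k => by rw [Function.iterate_succ_apply, pow_succ', mul_smul]
  rw [discountedBirkhoffSum, (summable_discountedBirkhoffSum hr hS x).tsum_eq_zero_add]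
  simp only [hshift, pow_zero, one_smul, Function.iterate_zero_apply]
  rw [(summable_discountedBirkhoffSum hr hS (T x)).tsum_const_smul, discountedBirkhoffSum]

lemma continuous_discountedBirkhoffSum [TopologicalSpace X] (hT : Continuous T) (hr : ‖r‖ < 1)
    (hSc : Continuous S) (hS : ∀ x, ‖S x‖ ≤ C) :
    Continuous (discountedBirkhoffSum T r S) :=
  continuous_tsum (fun k => continuous_const.smul (hSc.comp (hT.iterate k)))
    (summable_geometric_mul_const hr C) fun k _ => norm_pow_smul_le (hS _) k

lemma eq_neg_discountedBirkhoffSum (hr : ‖r‖ < 1) (hS : ∀ x, ‖S x‖ ≤ C)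
    {B : X → E} {C' : ℝ} (hB : ∀ x, ‖B x‖ ≤ C') (h : ∀ x, B x - r • B (T x) = -S x) :
    B = -discountedBirkhoffSum T r S := by
  rw [← add_eq_zero_iff_eq_neg]
  refine eq_zero_of_eq_smul_comp (T := T) hr (C := C' + (1 - ‖r‖)⁻¹ * C)
    (fun x => (norm_add_le _ _).trans (add_le_add (hB x) (norm_discountedBirkhoffSum_le hr hS x)))
    fun x => ?_
  rw [← sub_eq_zero, Pi.add_apply, Pi.add_apply, smul_add,
    discountedBirkhoffSum_eq_add_smul hr hS x]
  linear_combination (norm := module) h x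

end DiscountedBirkhoffSum

lemma isCompact_range_of_intVec_periodic {n : ℕ} {Y : Type*} [TopologicalSpace Y] {f : V n → Y}
    (hf : Continuous f) (hper : ∀ (θ : V n) (m : Fin n → ℤ), f (θ + intVec m) = f θ) :
    IsCompact (range f) := by
  let cube : Set (V n) := WithLp.toLp 2 '' univ.pi fun _ => Icc 0 1
  have hcube : IsCompact cube :=
    (isCompact_univ_pi fun _ => isCompact_Icc).image (PiLp.continuous_toLp 2 _)
  suffices range f = f '' cube from this ▸ hcube.image hf
  refine (image_subset_range f cube).antisymm' ?_
  rintro _ ⟨θ, rfl⟩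
  refine ⟨WithLp.toLp 2 fun i => Int.fract (θ i),
    ⟨_, fun i _ => ⟨Int.fract_nonneg _, (Int.fract_lt_one _).le⟩, rfl⟩, ?_⟩
  have hθ : WithLp.toLp 2 (fun i => Int.fract (θ i)) + intVec (fun i => ⌊θ i⌋) = θ := by
    ext i
    exact Int.fract_add_floor (θ i)
  rw [← hper _ (fun i => ⌊θ i⌋), hθ]

lemma exists_norm_le_of_intVec_periodic {n : ℕ} {E : Type*} [SeminormedAddGroup E]
    {f : V n → E} (hf : Continuous f)
    (hper : ∀ (θ : V n) (m : Fin n → ℤ), f (θ + intVec m) = f θ) :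
    ∃ C, ∀ θ, ‖f θ‖ ≤ C := by
  obtain ⟨C, hC⟩ :=
    isBounded_iff_forall_norm_le.mp (isCompact_range_of_intVec_periodic hf hper).isBounded
  exact ⟨C, fun θ => hC _ (mem_range_self θ)⟩

lemma comp_add_eq_smul_of_blockUpperTriangular {𝕜 E F G : Type*} [NormedField 𝕜]
    [NormedAddCommGroup E] [NormedSpace 𝕜 E] [NormedAddCommGroup F] [NormedSpace 𝕜 F]
    [NormedAddCommGroup G] [NormedSpace 𝕜 G] {A : F →L[𝕜] F} {P P' : E →L[𝕜] F}
    {W W' : G →L[𝕜] F} {S B B' : G →L[𝕜] E} {c : 𝕜} (hP : A.comp P = P')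
    (hW : A.comp W = P'.comp S + c • W') (hB : B - c • B' = -S) :
    A.comp (P.comp B + W) = c • (P'.comp B' + W') := by
  have hS : S = c • B' - B := by rw [← neg_sub, hB, neg_neg]
  rw [ContinuousLinearMap.comp_add, ← ContinuousLinearMap.comp_assoc, hP, hW, hS,
    ContinuousLinearMap.comp_sub, ContinuousLinearMap.comp_smul, smul_add]
  abel

theorem stmt16_general {n : ℕ} (lam : ℝ) (hlam : 0 < lam) (ω : V n)
    (K : V n → V n × V n)
    (DΦ : V n × V n → (V n × V n) →L[ℝ] (V n × V n))
    (DK Vm : V n → (V n →L[ℝ] (V n × V n)))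
    (S : V n → (V n →L[ℝ] V n))
    (hS : Continuous S)
    (hSper : ∀ (θ : V n) (m : Fin n → ℤ), S (θ + intVec m) = S θ)
    (hblock1 : ∀ θ : V n, (DΦ (K θ)).comp (DK θ) = DK (θ + ω))
    (hblock2 : ∀ θ : V n, (DΦ (K θ)).comp (Vm θ) =
      (DK (θ + ω)).comp (S θ) + Real.exp (-lam) • Vm (θ + ω)) :
    (∃! B : V n → (V n →L[ℝ] V n),
      Continuous B ∧ (∀ (θ : V n) (m : Fin n → ℤ), B (θ + intVec m) = B θ) ∧
      ∀ θ : V n, B θ - Real.exp (-lam) • B (θ + ω) = -S θ) ∧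
    (∀ B : V n → (V n →L[ℝ] V n),
      (Continuous B ∧ (∀ (θ : V n) (m : Fin n → ℤ), B (θ + intVec m) = B θ) ∧
        ∀ θ : V n, B θ - Real.exp (-lam) • B (θ + ω) = -S θ) →
      (∀ θ : V n, B θ = -∑' k : ℕ, Real.exp (-(lam * k)) • S (θ + (k : ℝ) • ω)) ∧
      ∀ θ : V n, (DΦ (K θ)).comp ((DK θ).comp (B θ) + Vm θ) =
        Real.exp (-lam) • ((DK (θ + ω)).comp (B (θ + ω)) + Vm (θ + ω))) := by
  set r := Real.exp (-lam)
  have hr : ‖r‖ < 1 := by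
    rw [Real.norm_of_nonneg (Real.exp_nonneg _)]
    exact Real.exp_lt_one_iff.mpr (neg_neg_of_pos hlam)
  obtain ⟨C, hC⟩ := exists_norm_le_of_intVec_periodic hS hSper
  have hseries : ∀ θ, ∑' k : ℕ, Real.exp (-(lam * k)) • S (θ + (k : ℝ) • ω) =
      discountedBirkhoffSum (· + ω) r S θ := by
    intro θ
    refine tsum_congr fun k => ?_
    rw [add_right_iterate_apply, Nat.cast_smul_eq_nsmul, ← Real.exp_nat_mul]
    ring_nf
  have hunique : ∀ B : V n → (V n →L[ℝ] V n),
      (Continuous B ∧ (∀ (θ : V n) (m : Fin n → ℤ), B (θ + intVec m) = B θ) ∧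
        ∀ θ : V n, B θ - r • B (θ + ω) = -S θ) → B = -discountedBirkhoffSum (· + ω) r S := by
    rintro B ⟨hBc, hBper, hB⟩
    obtain ⟨C', hC'⟩ := exists_norm_le_of_intVec_periodic hBc hBper
    exact eq_neg_discountedBirkhoffSum hr hC hC' hB
  refine ⟨⟨-discountedBirkhoffSum (· + ω) r S, ⟨?_, fun θ m => ?_, fun θ => ?_⟩, hunique⟩,
    fun B hB => ⟨fun θ => by rw [hseries, hunique B hB]; rfl, fun θ =>
      comp_add_eq_smul_of_blockUpperTriangular (hblock1 θ) (hblock2 θ) (hB.2.2 θ)⟩⟩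
  · exact (continuous_discountedBirkhoffSum (continuous_add_const ω) hr hS hC).neg
  · exact congrArg Neg.neg (discountedBirkhoffSum_apply_eq_of_commute
      (fun x => (add_right_comm x _ _).symm) (fun x => hSper x m) θ)
  · rw [Pi.neg_apply, Pi.neg_apply, discountedBirkhoffSum_eq_add_smul hr hC θ, smul_neg]
    abel

/-- Let `M(θ) = (DK(θ) | V(θ))` where `K` parametrizes a KAM torus with
`Φ¹(K(θ)) = K(θ+ω)`, and suppose the linearized dynamics is block upper-triangular:
`DΦ¹(K θ) ∘ DK θ = DK (θ+ω)` and `DΦ¹(K θ) ∘ V θ = DK (θ+ω) ∘ S θ + e^{-λ} V (θ+ω)`,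
with `λ > 0` and `S` continuous on `𝕋ⁿ`.  Then the cohomological equation
`B(θ) - e^{-λ} B(θ+ω) = -S(θ)` has a unique continuous (periodic) solution `B`, given by
`B(θ) = -∑_{k≥0} e^{-λk} S(θ + kω)`, and the bundle spanned by `DK(θ)B(θ) + V(θ)` is
invariant with contraction factor `e^{-λ}`, i.e. the splitting is block diagonal
`diag(Id, e^{-λ}Id)`. -/
theorem stmt16 {n : ℕ} (lam : ℝ) (hlam : 0 < lam) (ω : V n)
    (K : V n → V n × V n)
    (Φ : V n × V n → V n × V n) (hΦK : ∀ θ : V n, Φ (K θ) = K (θ + ω))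
    (DΦ : V n × V n → (V n × V n) →L[ℝ] (V n × V n))
    (hDΦ : ∀ θ : V n, HasFDerivAt Φ (DΦ (K θ)) (K θ))
    (DK Vm : V n → (V n →L[ℝ] (V n × V n)))
    (S : V n → (V n →L[ℝ] V n))
    (hS : Continuous S)
    (hSper : ∀ (θ : V n) (m : Fin n → ℤ), S (θ + intVec m) = S θ)
    (hblock1 : ∀ θ : V n, (DΦ (K θ)).comp (DK θ) = DK (θ + ω))
    (hblock2 : ∀ θ : V n, (DΦ (K θ)).comp (Vm θ) =
      (DK (θ + ω)).comp (S θ) + Real.exp (-lam) • Vm (θ + ω)) :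
    (∃! B : V n → (V n →L[ℝ] V n),
      Continuous B ∧ (∀ (θ : V n) (m : Fin n → ℤ), B (θ + intVec m) = B θ) ∧
      ∀ θ : V n, B θ - Real.exp (-lam) • B (θ + ω) = -S θ) ∧
    (∀ B : V n → (V n →L[ℝ] V n),
      (Continuous B ∧ (∀ (θ : V n) (m : Fin n → ℤ), B (θ + intVec m) = B θ) ∧
        ∀ θ : V n, B θ - Real.exp (-lam) • B (θ + ω) = -S θ) →
      (∀ θ : V n, B θ = -∑' k : ℕ, Real.exp (-(lam * k)) • S (θ + (k : ℝ) • ω)) ∧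
      ∀ θ : V n, (DΦ (K θ)).comp ((DK θ).comp (B θ) + Vm θ) =
        Real.exp (-lam) • ((DK (θ + ω)).comp (B (θ + ω)) + Vm (θ + ω))) :=
  stmt16_general lam hlam ω K DΦ DK Vm S hS hSper hblock1 hblock2
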